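/- arXiv:1803.03054 — 9 statements merged into one kernel-verified Lean document; each statement's English description precedes it below -/
import Mathlib

section
/- Let F be a skew-symmetric endomorphism of a real vector space V with nondegenerate symmetric bilinear form g of Lorentzian signature (1,q) or (p,1). If F ∘ F = 0, then F = 0. -/
/-!
Skew-symmetry and `F ∘ F = 0` give `B (F u) (F v) = - B u (F (F v)) = 0`, so every vector in the
image of `F` is null, and symmetry of `B` adds `B (F u) u = 0`. In Lorentzian signature the only
null vector orthogonal to the timelike basis vector `e` is `0`. Hence `F e = 0` (it is null and
orthogonal to `e`), and then every `F u` is null with `B (F u) e = - B u (F e) = 0`, so `F u = 0`.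
-/

namespace LinearMap

variable {V : Type*} [AddCommGroup V] [Module ℝ V] {B : V →ₗ[ℝ] V →ₗ[ℝ] ℝ}

theorem eq_zero_of_skew_of_comp_self_eq_zero (hB : B.IsSymm) {e : V}
    (he : ∀ x, B x x = 0 → B x e = 0 → x = 0) {F : V →ₗ[ℝ] V}
    (hskew : ∀ u v, B (F u) v = - B u (F v)) (hFF : F ∘ₗ F = 0) : F = 0 := by
  have hFF' (u : V) : F (F u) = 0 := congr($hFF u)
  have hnull (u : V) : B (F u) (F u) = 0 := by rw [hskew, hFF', map_zero, neg_zero]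
  have hFe : F e = 0 := by
    refine he _ (hnull e) ?_
    have h := hskew e e
    rw [← hB.eq (F e) e, RingHom.id_apply] at h
    linarith
  ext u
  exact he _ (hnull u) (by rw [hskew, hFe, map_zero, neg_zero])

variable {ι : Type*} [DecidableEq ι] {b : Module.Basis ι ℝ V} {w : ι → ℝ}

theorem apply_basis_eq_repr_mul (hb : ∀ i j, B (b i) (b j) = if i = j then w i else 0)
    (x : V) (j : ι) : B x (b j) = b.repr x j * w j := by
  have h : B.flip (b j) = w j • b.coord j :=
    b.ext fun i => by
      rw [flip_apply, hb, smul_apply, Module.Basis.coord_apply, Module.Basis.repr_self,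
        Finsupp.single_apply, smul_eq_mul]
      split_ifs <;> simp_all
  rw [← flip_apply, h, smul_apply, Module.Basis.coord_apply, smul_eq_mul, mul_comm]

theorem isSymm_of_basis_diagonal (hb : ∀ i j, B (b i) (b j) = if i = j then w i else 0) :
    B.IsSymm :=
  isSymm_iff_eq_flip.mpr <| ext_basis b b fun i j => by
    rw [flip_apply, hb, hb]
    split_ifs <;> simp_all

variable [Fintype ι]

theorem apply_self_eq_sum (hb : ∀ i j, B (b i) (b j) = if i = j then w i else 0) (x : V) :
    B x x = ∑ j, b.repr x j ^ 2 * w j := by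
  rw [← congrArg (B x) (b.sum_repr x), map_sum]
  simp only [map_smul, smul_eq_mul, apply_basis_eq_repr_mul hb]
  exact Finset.sum_congr rfl fun j _ => by ring

theorem eq_zero_of_apply_self_eq_zero_of_apply_basis_eq_zero
    (hb : ∀ i j, B (b i) (b j) = if i = j then w i else 0) {i₀ : ι} (hw₀ : w i₀ ≠ 0)
    (hw : ∀ i ≠ i₀, 0 < w i) {x : V} (hx : B x x = 0) (hx₀ : B x (b i₀) = 0) : x = 0 := by
  have hrepr₀ : b.repr x i₀ = 0 := by
    rw [apply_basis_eq_repr_mul hb] at hx₀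
    exact (mul_eq_zero.mp hx₀).resolve_right hw₀
  have hnonneg (j : ι) : 0 ≤ b.repr x j ^ 2 * w j := by
    rcases eq_or_ne j i₀ with rfl | hj
    · simp [hrepr₀]
    · exact mul_nonneg (sq_nonneg _) (hw j hj).le
  rw [apply_self_eq_sum hb, Finset.sum_eq_zero_iff_of_nonneg fun j _ => hnonneg j] at hx
  refine b.repr.map_eq_zero_iff.mp (Finsupp.ext fun j => ?_)
  rcases eq_or_ne j i₀ with rfl | hj
  · exact hrepr₀
  · exact pow_eq_zero_iff two_ne_zero |>.mp <|
      (mul_eq_zero.mp (hx j (Finset.mem_univ j))).resolve_right (hw j hj).ne'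

theorem eq_zero_of_skew_of_comp_self_eq_zero_of_basis_diagonal
    (hb : ∀ i j, B (b i) (b j) = if i = j then w i else 0) {i₀ : ι} (hw₀ : w i₀ ≠ 0)
    (hw : ∀ i ≠ i₀, 0 < w i) {F : V →ₗ[ℝ] V} (hskew : ∀ u v, B (F u) v = - B u (F v))
    (hFF : F ∘ₗ F = 0) : F = 0 :=
  eq_zero_of_skew_of_comp_self_eq_zero (isSymm_of_basis_diagonal hb)
    (fun _ => eq_zero_of_apply_self_eq_zero_of_apply_basis_eq_zero hb hw₀ hw) hskew hFF

end LinearMap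

/-- Lemma B.4 (i): in Lorentzian signature (p = 1 or q = 1), a skew-symmetric
endomorphism F with F ∘ F = 0 vanishes. -/
theorem skew_sq_zero_lorentzian
    (p q : ℕ) (V : Type*) [AddCommGroup V] [Module ℝ V]
    (B : V →ₗ[ℝ] V →ₗ[ℝ] ℝ)
    (b : Module.Basis (Fin p ⊕ Fin q) ℝ V)
    (hb : ∀ i j, B (b i) (b j) =
      if i = j then Sum.elim (fun _ => (-1 : ℝ)) (fun _ => (1 : ℝ)) i else 0)
    (hLor : p = 1 ∨ q = 1)
    (F : V →ₗ[ℝ] V)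
    (hskew : ∀ u v : V, B (F u) v = - B u (F v))
    (hFF : F ∘ₗ F = 0) :
    F = 0 := by
  rcases hLor with rfl | rfl
  · refine LinearMap.eq_zero_of_skew_of_comp_self_eq_zero_of_basis_diagonal hb (i₀ := .inl 0)
      (by simp) ?_ hskew hFF
    rintro (i | i) hi
    · exact absurd (congrArg Sum.inl (Subsingleton.elim i 0)) hi
    · exact one_pos
  · -- in signature `(p, 1)` the form `-B` has signature `(1, p)`
    have hb' (i j) : (-B) (b i) (b j) =
        if i = j then -Sum.elim (fun _ => (-1 : ℝ)) (fun _ => (1 : ℝ)) i else 0 := by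
      rw [LinearMap.neg_apply, LinearMap.neg_apply, hb]
      split_ifs <;> simp
    refine LinearMap.eq_zero_of_skew_of_comp_self_eq_zero_of_basis_diagonal hb' (i₀ := .inr 0)
      (by simp) ?_ (fun u v => by simp [hskew]) hFF
    rintro (i | i) hi
    · simp
    · exact absurd (congrArg Sum.inr (Subsingleton.elim i 0)) hi
end

section
/- Let F be a skew-symmetric endomorphism of a real vector space V with nondegenerate symmetric bilinear form g of signature (2,q) with q ≥ 2. Then F ∘ F = 0 if and only if either F = 0 or there exist vectors k, ℓ ∈ V, forming a basis of a 2-dimensional totally degenerate subspace (i.e., g(k,k) = g(k,ℓ) = g(ℓ,ℓ) = 0 and k,ℓ linearly independent), such that F(u) = g(ℓ,u)k − g(k,u)ℓ for all u ∈ V. -/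
/-!
Since `F ∘ F = 0`, the range of `F` is totally isotropic: `B (F u) (F v) = -B u (F (F v)) = 0`.
In signature `(2, q)` such a subspace has dimension at most `2`, because the two negative
coordinates of a null vector determine it. If `F ≠ 0`, nondegeneracy gives `u, v` with
`B (F u) v = 1`; as `B (F w) w = 0` for all `w`, the vectors `F u, F v` are independent and
hence span the range. Pairing `F w = s • F u + t • F v` with `v` and with `u` then gives
`F w = B (F u) w • F v - B (F v) w • F u`.
-/

open Module Submodule

namespace LinearMap.BilinForm

section Signature

variable {K V ι κ : Type*} [Field K] [AddCommGroup V] [Module K V]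
  [DecidableEq ι] [DecidableEq κ]
  {B : LinearMap.BilinForm K V} {b : Basis (ι ⊕ κ) K V}

lemma isSymm_of_basis
    (hb : ∀ i j, B (b i) (b j) =
      if i = j then Sum.elim (fun _ => (-1 : K)) (fun _ => 1) i else 0) :
    B.IsSymm := by
  refine isSymm_def.2 fun x y => ?_
  have : B = B.flip := b.ext fun i => b.ext fun j => by
    rw [flip_apply, hb, hb]
    rcases eq_or_ne i j with rfl | hij
    · rfl
    · simp [hij, hij.symm]
  exact LinearMap.congr_fun₂ this x y

variable [Fintype ι] [Fintype κ]

lemma apply_basis_eq_repr_mul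
    (hb : ∀ i j, B (b i) (b j) =
      if i = j then Sum.elim (fun _ => (-1 : K)) (fun _ => 1) i else 0)
    (x : V) (j : ι ⊕ κ) :
    B x (b j) = b.repr x j * Sum.elim (fun _ => (-1 : K)) (fun _ => 1) j := by
  calc B x (b j) = B (∑ i, b.repr x i • b i) (b j) := by rw [b.sum_repr]
    _ = _ := by
      rw [map_sum, LinearMap.sum_apply]
      simp [hb]

lemma separatingLeft_of_basis
    (hb : ∀ i j, B (b i) (b j) =
      if i = j then Sum.elim (fun _ => (-1 : K)) (fun _ => 1) i else 0) :
    B.SeparatingLeft := fun x hx => b.forall_coord_eq_zero_iff.1 fun j => by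
  have := hx (b j)
  rw [apply_basis_eq_repr_mul hb] at this
  rcases j with j | j <;> simpa using this

lemma apply_self_eq_sum
    (hb : ∀ i j, B (b i) (b j) =
      if i = j then Sum.elim (fun _ => (-1 : K)) (fun _ => 1) i else 0)
    (x : V) :
    B x x = ∑ j : κ, b.repr x (.inr j) ^ 2 - ∑ i : ι, b.repr x (.inl i) ^ 2 := by
  calc B x x = B x (∑ j, b.repr x j • b j) := by rw [b.sum_repr]
    _ = _ := by
      rw [map_sum]
      simp only [map_smul, smul_eq_mul, apply_basis_eq_repr_mul hb, Fintype.sum_sum_type,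
        Sum.elim_inl, Sum.elim_inr, mul_neg, mul_one, ← sq, Finset.sum_neg_distrib]
      abel

lemma finrank_le_card_of_isotropic [LinearOrder K] [IsStrictOrderedRing K]
    (hb : ∀ i j, B (b i) (b j) =
      if i = j then Sum.elim (fun _ => (-1 : K)) (fun _ => 1) i else 0)
    (W : Submodule K V) (hW : ∀ w ∈ W, B w w = 0) :
    finrank K W ≤ Fintype.card ι := by
  let π : V →ₗ[K] ι → K := LinearMap.pi fun i => b.coord (.inl i)
  have hinj : Function.Injective (π ∘ₗ W.subtype) := by
    rw [← LinearMap.ker_eq_bot, LinearMap.ker_eq_bot']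
    rintro ⟨w, hw⟩ hπ
    have hinl : ∀ i, b.repr w (.inl i) = 0 := fun i => congrFun hπ i
    have hsq : ∑ j : κ, b.repr w (.inr j) ^ 2 = 0 := by
      simpa [apply_self_eq_sum hb, hinl] using hW w hw
    have hinr : ∀ j, b.repr w (.inr j) = 0 := fun j =>
      pow_eq_zero_iff two_ne_zero |>.1 <|
        (Finset.sum_eq_zero_iff_of_nonneg fun _ _ => sq_nonneg _).1 hsq j (Finset.mem_univ j)
    exact Subtype.ext <| b.forall_coord_eq_zero_iff.1 <| by
      rintro (i | j)
      · exact hinl i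
      · exact hinr j
  simpa using LinearMap.finrank_le_finrank_of_injective hinj

end Signature

section Skew

variable {K V : Type*} [Field K] [AddCommGroup V] [Module K V]
  {B : LinearMap.BilinForm K V} {F : V →ₗ[K] V}

lemma exists_apply_apply_eq_one (hB : B.SeparatingLeft) (hF : F ≠ 0) :
    ∃ u v, B (F u) v = 1 := by
  obtain ⟨u, hu⟩ : ∃ u, F u ≠ 0 := by
    by_contra! h
    exact hF (LinearMap.ext h)
  obtain ⟨v, hv⟩ : ∃ v, B (F u) v ≠ 0 := by
    by_contra! h
    exact hu (hB _ h)
  exact ⟨u, (B (F u) v)⁻¹ • v, by simp [hv]⟩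

variable [CharZero K]

lemma apply_apply_self_eq_zero (hF : ∀ u v, B (F u) v = -B (F v) u) (u : V) :
    B (F u) u = 0 :=
  self_eq_neg.1 (hF u u)

lemma linearIndependent_pair_of_apply_ne_zero (hF : ∀ u v, B (F u) v = -B (F v) u) {u v : V}
    (huv : B (F u) v ≠ 0) : LinearIndependent K ![F u, F v] := by
  refine LinearIndependent.pair_iff.2 fun s t hst => ?_
  have hu : t * B (F v) u = 0 := by
    simpa [apply_apply_self_eq_zero hF] using congrArg (B · u) hst
  have hv : s * B (F u) v = 0 := by
    simpa [apply_apply_self_eq_zero hF] using congrArg (B · v) hst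
  rw [hF v u, mul_neg, neg_eq_zero] at hu
  exact ⟨(mul_eq_zero.1 hv).resolve_right huv, (mul_eq_zero.1 hu).resolve_right huv⟩

lemma eq_smul_sub_smul_of_range_le_span_pair (hF : ∀ u v, B (F u) v = -B (F v) u) {u v : V}
    (hrange : LinearMap.range F ≤ span K {F u, F v}) (huv : B (F u) v = 1) (w : V) :
    F w = B (F u) w • F v - B (F v) w • F u := by
  obtain ⟨s, t, hst⟩ := mem_span_pair.1 (hrange (LinearMap.mem_range_self F w))
  have hs : s = -B (F v) w := by
    simpa [apply_apply_self_eq_zero hF, huv, hF w v] using congrArg (B · v) hst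
  have ht : t = B (F u) w := by
    simpa [apply_apply_self_eq_zero hF, hF v u, huv, hF w u] using congrArg (B · u) hst
  rw [← hst, hs, ht, neg_smul, neg_add_eq_sub]

end Skew

end LinearMap.BilinForm

open LinearMap.BilinForm

theorem skew_sq_zero_signature_two_general
    (q : ℕ) (V : Type*) [AddCommGroup V] [Module ℝ V]
    (B : V →ₗ[ℝ] V →ₗ[ℝ] ℝ)
    (b : Module.Basis (Fin 2 ⊕ Fin q) ℝ V)
    (hb : ∀ i j, B (b i) (b j) =
      if i = j then Sum.elim (fun _ => (-1 : ℝ)) (fun _ => (1 : ℝ)) i else 0)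
    (F : V →ₗ[ℝ] V)
    (hskew : ∀ u v : V, B (F u) v = - B u (F v)) :
    F ∘ₗ F = 0 ↔
      (F = 0 ∨ ∃ k l : V, LinearIndependent ℝ ![k, l] ∧
        B k k = 0 ∧ B k l = 0 ∧ B l l = 0 ∧
        ∀ u : V, F u = B l u • k - B k u • l) := by
  have hsymm := isSymm_of_basis hb
  have hF : ∀ u v, B (F u) v = -B (F v) u := fun u v => by rw [hskew, hsymm.eq u]
  have : FiniteDimensional ℝ V := .of_basis b
  constructor
  · intro hFF
    refine or_iff_not_imp_left.2 fun hF0 => ?_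
    have hnull : ∀ u v, B (F u) (F v) = 0 := fun u v => by
      rw [hskew, show F (F v) = 0 from LinearMap.congr_fun hFF v, map_zero, neg_zero]
    obtain ⟨u, v, huv⟩ := exists_apply_apply_eq_one (separatingLeft_of_basis hb) hF0
    have hind := linearIndependent_pair_of_apply_ne_zero hF (huv ▸ one_ne_zero)
    have hrange : LinearMap.range F ≤ span ℝ {F u, F v} := by
      refine (eq_of_le_of_finrank_le (span_le.2 ?_) ?_).ge
      · rintro _ (rfl | rfl) <;> exact LinearMap.mem_range_self F _
      · calc finrank ℝ (LinearMap.range F) ≤ 2 := by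
              simpa using finrank_le_card_of_isotropic hb (LinearMap.range F) (by
                rintro _ ⟨w, rfl⟩
                exact hnull w w)
          _ = finrank ℝ (span ℝ {F u, F v}) := by
              rw [← Matrix.range_cons_cons_empty, finrank_span_eq_card hind, Fintype.card_fin]
    exact ⟨F v, F u, LinearIndependent.pair_symm_iff.1 hind, hnull v v, hnull v u, hnull u u,
      eq_smul_sub_smul_of_range_le_span_pair hF hrange huv⟩
  · rintro (rfl | ⟨k, l, -, hkk, hkl, hll, hFkl⟩)
    · rfl
    · ext u
      simp [hFkl, hkk, hkl, hll, hsymm.eq l k]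

/-- Lemma B.4 (ii): in signature (2,q), q ≥ 2, a skew-symmetric endomorphism F satisfies
F ∘ F = 0 if and only if F = 0 or F = k ⊗ ℓ♭ − ℓ ⊗ k♭ for a basis {k,ℓ} of a
two-dimensional totally degenerate subspace. -/
theorem skew_sq_zero_signature_two
    (q : ℕ) (hq : 2 ≤ q) (V : Type*) [AddCommGroup V] [Module ℝ V]
    (B : V →ₗ[ℝ] V →ₗ[ℝ] ℝ)
    (b : Module.Basis (Fin 2 ⊕ Fin q) ℝ V)
    (hb : ∀ i j, B (b i) (b j) =
      if i = j then Sum.elim (fun _ => (-1 : ℝ)) (fun _ => (1 : ℝ)) i else 0)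
    (F : V →ₗ[ℝ] V)
    (hskew : ∀ u v : V, B (F u) v = - B u (F v)) :
    F ∘ₗ F = 0 ↔
      (F = 0 ∨ ∃ k l : V, LinearIndependent ℝ ![k, l] ∧
        B k k = 0 ∧ B k l = 0 ∧ B l l = 0 ∧
        ∀ u : V, F u = B l u • k - B k u • l) :=
  skew_sq_zero_signature_two_general q V B b hb F hskew
end

section
/- Let F be a skew-symmetric endomorphism of a real vector space V with nondegenerate symmetric bilinear form g of Lorentzian signature. Suppose there exist a nonzero null vector k ∈ V and a nonzero real number μ such that (F ∘ F)(u) = μ g(k,u) k for all u ∈ V. Then there exists w ∈ V, linearly independent of k, with g(k,w) = 0 and g(w,w) = −μ, such that F(u) = g(w,u)k − g(k,u)w for all u ∈ V. Conversely, any F of this form with k null, w orthogonal to and linearly independent of k, satisfies (F ∘ F)(u) = −g(w,w) g(k,u) k. -/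
/-!
Comparing `F ∘ F² = F² ∘ F` at a vector `u₀` with `g(k, u₀) = 1` shows that `F k` is a multiple
of `k`; as `F² k = μ g(k, k) k = 0`, in fact `F k = 0`, so `F` maps into `k^⊥`. For `v ⊥ k` the
vector `F v` is then null and orthogonal to `k`, and in Lorentzian signature (Witt index one) this
forces `F v ∈ ℝ k`; the coefficient is read off by pairing with `u₀`. Splitting
`u = (u - g(k, u) u₀) + g(k, u) u₀` gives the formula with `w = -F u₀`.
-/

open Module

namespace LinearMap.BilinForm

section Diagonal

variable {R V ι : Type*} [AddCommGroup V] [Fintype ι] [DecidableEq ι]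

lemma apply_eq_sum_of_basis_diagonal [CommRing R] [Module R V] {B : LinearMap.BilinForm R V}
    (b : Basis ι R V) (ε : ι → R) (hb : ∀ i j, B (b i) (b j) = if i = j then ε i else 0)
    (u v : V) : B u v = ∑ i, ε i * (b.repr u i * b.repr v i) := by
  conv_lhs => rw [← b.sum_repr u, ← b.sum_repr v]
  simp only [map_sum, map_smul, LinearMap.sum_apply, LinearMap.smul_apply, smul_eq_mul, hb,
    mul_ite, mul_zero, Finset.sum_ite_eq', Finset.mem_univ, if_true]
  exact Finset.sum_congr rfl fun i _ => by ring

lemma isSymm_of_basis_diagonal [CommRing R] [Module R V] {B : LinearMap.BilinForm R V}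
    (b : Basis ι R V) (ε : ι → R) (hb : ∀ i j, B (b i) (b j) = if i = j then ε i else 0) :
    B.IsSymm :=
  isSymm_def.mpr fun u v => by
    simp only [apply_eq_sum_of_basis_diagonal b ε hb, mul_comm (b.repr u _)]

lemma exists_apply_eq_one_of_basis_diagonal [Field R] [Module R V] {B : LinearMap.BilinForm R V}
    (b : Basis ι R V) (ε : ι → R) (hb : ∀ i j, B (b i) (b j) = if i = j then ε i else 0)
    (hε : ∀ i, ε i ≠ 0) {k : V} (hk : k ≠ 0) : ∃ u, B k u = 1 := by
  obtain ⟨j, hj⟩ : ∃ j, b.repr k j ≠ 0 := by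
    by_contra! h
    exact hk (b.ext_elem fun i => by simpa using h i)
  have hkj : B k (b j) = ε j * b.repr k j := by
    simp [apply_eq_sum_of_basis_diagonal b ε hb, Finsupp.single_apply]
  refine ⟨(B k (b j))⁻¹ • b j, ?_⟩
  rw [map_smul, smul_eq_mul, inv_mul_cancel₀ (by rw [hkj]; exact mul_ne_zero (hε j) hj)]

lemma eq_zero_of_coord_eq_zero_of_apply_self_eq_zero [Field R] [LinearOrder R]
    [IsStrictOrderedRing R] [Module R V] {B : LinearMap.BilinForm R V}
    (b : Basis ι R V) (ε : ι → R) (hb : ∀ i j, B (b i) (b j) = if i = j then ε i else 0)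
    (i₀ : ι) {s : R} (hs : s ≠ 0) (hε : ∀ i ≠ i₀, ε i = s) {z : V} (hz : b.coord i₀ z = 0)
    (hzz : B z z = 0) : z = 0 := by
  have hsum : ∑ i, b.repr z i * b.repr z i = 0 := by
    have hterm : ∀ i, ε i * (b.repr z i * b.repr z i) = s * (b.repr z i * b.repr z i) := by
      intro i
      by_cases hi : i = i₀
      · subst hi; simp [← b.coord_apply, hz]
      · rw [hε i hi]
    rw [apply_eq_sum_of_basis_diagonal b ε hb, Finset.sum_congr rfl fun i _ => hterm i,
      ← Finset.mul_sum] at hzz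
    exact (mul_eq_zero.mp hzz).resolve_left hs
  refine b.ext_elem fun i => ?_
  simpa using (Finset.sum_eq_zero_iff_of_nonneg fun i _ => mul_self_nonneg _).mp hsum i
    (Finset.mem_univ i)

end Diagonal

section Field

variable {K V : Type*} [Field K] [AddCommGroup V] [Module K V] {B : LinearMap.BilinForm K V}

lemma exists_eq_smul_of_isOrtho_of_apply_self_eq_zero (hB : B.IsSymm) (t : V →ₗ[K] K)
    (ht : ∀ z, t z = 0 → B z z = 0 → z = 0) {x y : V} (hx : x ≠ 0) (hxx : B x x = 0)
    (hyy : B y y = 0) (hxy : B x y = 0) : ∃ c : K, y = c • x := by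
  have htx : t x ≠ 0 := fun h => hx (ht x h hxx)
  -- `t x • y - t y • x` is null (as `x`, `y` span a totally isotropic plane) and lies in `ker t`
  have hz : t x • y - t y • x = 0 := by
    refine ht _ (by simp only [map_sub, map_smul, smul_eq_mul]; ring) ?_
    simp only [map_sub, map_smul, LinearMap.sub_apply, LinearMap.smul_apply, smul_eq_mul, hxx,
      hyy, hxy, hB.eq y x]
    ring
  refine ⟨(t x)⁻¹ * t y, ?_⟩
  rw [mul_smul, ← sub_eq_zero.mp hz, smul_smul, inv_mul_cancel₀ htx, one_smul]

lemma linearIndependent_pair_of_apply_eq_zero {k w : V} (hk : k ≠ 0) (hwk : B w k = 0)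
    (hww : B w w ≠ 0) : LinearIndependent K ![k, w] := by
  refine (LinearIndependent.pair_iff' hk).mpr fun a ha => hww ?_
  conv_lhs => arg 2; rw [← ha]
  rw [map_smul, hwk, smul_zero]

variable {F : V →ₗ[K] V} {k u₀ : V} {μ : K}

lemma map_eq_zero_of_map_map_eq (hFF : ∀ u, F (F u) = (μ * B k u) • k) (hμ : μ ≠ 0)
    (hk : k ≠ 0) (hkk : B k k = 0) (hu₀ : B k u₀ = 1) : F k = 0 := by
  obtain ⟨c, hc⟩ : ∃ c : K, F k = c • k := by
    refine ⟨B k (F u₀), smul_right_injective V hμ ?_⟩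
    simp only [smul_smul]
    rw [← hFF (F u₀), hFF u₀, hu₀, mul_one, map_smul]
  have hcc : (c * c) • k = 0 := by
    rw [mul_smul, ← hc, ← map_smul, ← hc, hFF k, hkk, mul_zero, zero_smul]
  rw [hc, mul_self_eq_zero.mp ((smul_eq_zero.mp hcc).resolve_right hk), zero_smul]

lemma apply_map_map_eq (hB : B.IsSymm) (hskew : ∀ u v, B (F u) v = -B u (F v))
    (hFF : ∀ u, F (F u) = (μ * B k u) • k) (u v : V) :
    B (F u) (F v) = -(μ * B k u * B k v) := by
  rw [hskew, hFF, map_smul, smul_eq_mul, hB.eq u k]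
  ring

lemma apply_map_self_eq_zero [NeZero (2 : K)] (hB : B.IsSymm)
    (hskew : ∀ u v, B (F u) v = -B u (F v)) (u : V) : B (F u) u = 0 := by
  have h := hskew u u
  rw [hB.eq u (F u)] at h
  have h2 : (2 : K) * B (F u) u = 0 := by linear_combination h
  exact (mul_eq_zero.mp h2).resolve_left two_ne_zero

lemma apply_map_eq_zero (hskew : ∀ u v, B (F u) v = -B u (F v)) (hFk : F k = 0) (v : V) :
    B k (F v) = 0 := by
  rw [← neg_eq_zero, ← hskew, hFk, map_zero, LinearMap.zero_apply]

lemma map_eq_apply_smul_of_apply_eq_zero (hB : B.IsSymm)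
    (hskew : ∀ u v, B (F u) v = -B u (F v)) (hFF : ∀ u, F (F u) = (μ * B k u) • k)
    (hnull : ∀ y, B y y = 0 → B k y = 0 → ∃ c : K, y = c • k) (hFk : F k = 0)
    (hu₀ : B k u₀ = 1) {v : V} (hv : B k v = 0) : F v = B u₀ (F v) • k := by
  obtain ⟨c, hc⟩ := hnull (F v) (by rw [apply_map_map_eq hB hskew hFF, hv]; ring)
    (apply_map_eq_zero hskew hFk v)
  rw [hc, map_smul, smul_eq_mul, hB.eq u₀ k, hu₀, mul_one]

lemma map_eq_smul_sub_smul [NeZero (2 : K)] (hB : B.IsSymm)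
    (hskew : ∀ u v, B (F u) v = -B u (F v)) (hFF : ∀ u, F (F u) = (μ * B k u) • k)
    (hnull : ∀ y, B y y = 0 → B k y = 0 → ∃ c : K, y = c • k) (hFk : F k = 0)
    (hu₀ : B k u₀ = 1) (u : V) : F u = B k u • F u₀ - B (F u₀) u • k := by
  have hv : B k (u - B k u • u₀) = 0 := by
    rw [map_sub, map_smul, hu₀, smul_eq_mul, mul_one, sub_self]
  have h := map_eq_apply_smul_of_apply_eq_zero hB hskew hFF hnull hFk hu₀ hv
  have hcoef : B u₀ (F (u - B k u • u₀)) = -B (F u₀) u := by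
    rw [← neg_neg (B u₀ _), ← hskew, map_sub, map_smul, apply_map_self_eq_zero hB hskew,
      smul_zero, sub_zero]
  rw [hcoef, map_sub, map_smul, sub_eq_iff_eq_add] at h
  rw [h, neg_smul]
  abel

theorem exists_eq_smul_sub_smul_of_map_map_eq [NeZero (2 : K)] (hB : B.IsSymm)
    (hskew : ∀ u v, B (F u) v = -B u (F v)) (hFF : ∀ u, F (F u) = (μ * B k u) • k)
    (hnull : ∀ y, B y y = 0 → B k y = 0 → ∃ c : K, y = c • k) (hμ : μ ≠ 0) (hk : k ≠ 0)
    (hkk : B k k = 0) (hu₀ : B k u₀ = 1) :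
    ∃ w, LinearIndependent K ![k, w] ∧ B k w = 0 ∧ B w w = -μ ∧
      ∀ u, F u = B w u • k - B k u • w := by
  have hFk := map_eq_zero_of_map_map_eq hFF hμ hk hkk hu₀
  have hkw : B k (-F u₀) = 0 := by rw [map_neg, apply_map_eq_zero hskew hFk, neg_zero]
  have hww : B (-F u₀) (-F u₀) = -μ := by
    rw [map_neg, map_neg, LinearMap.neg_apply, neg_neg, apply_map_map_eq hB hskew hFF, hu₀]
    ring
  refine ⟨-F u₀, linearIndependent_pair_of_apply_eq_zero hk (by rw [← hB.eq, hkw])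
    (by rw [hww]; exact neg_ne_zero.mpr hμ), hkw, hww, fun u => ?_⟩
  rw [map_eq_smul_sub_smul hB hskew hFF hnull hFk hu₀ u, map_neg, LinearMap.neg_apply, neg_smul,
    smul_neg]
  abel

end Field

lemma map_map_eq_of_eq_smul_sub_smul {R V : Type*} [CommRing R] [AddCommGroup V] [Module R V]
    {B : LinearMap.BilinForm R V} (hB : B.IsSymm) {G : V →ₗ[R] V} {k w : V} (hkk : B k k = 0)
    (hkw : B k w = 0) (hG : ∀ u, G u = B w u • k - B k u • w) (u : V) :
    G (G u) = (-(B w w) * B k u) • k := by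
  rw [hG (G u), hG u]
  simp only [map_sub, map_smul, smul_eq_mul, hkk, hkw, hB.eq w k]
  module

end LinearMap.BilinForm

open LinearMap.BilinForm in
/-- Lemma B.5 (Lorentzian case): if F is skew-symmetric on a Lorentzian vector space and
F ∘ F = μ k ⊗ k♭ with k null nonzero and μ ≠ 0, then F = k ⊗ w♭ − w ⊗ k♭ with w
orthogonal to and linearly independent of k and g(w,w) = −μ; and conversely. -/
theorem skew_sq_rank_one_lorentzian
    (p q : ℕ) (V : Type*) [AddCommGroup V] [Module ℝ V]
    (B : V →ₗ[ℝ] V →ₗ[ℝ] ℝ)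
    (b : Module.Basis (Fin p ⊕ Fin q) ℝ V)
    (hb : ∀ i j, B (b i) (b j) =
      if i = j then Sum.elim (fun _ => (-1 : ℝ)) (fun _ => (1 : ℝ)) i else 0)
    (hLor : p = 1 ∨ q = 1)
    (F : V →ₗ[ℝ] V)
    (hskew : ∀ u v : V, B (F u) v = - B u (F v))
    (k : V) (hk0 : k ≠ 0) (hknull : B k k = 0)
    (μ : ℝ) (hμ : μ ≠ 0)
    (hFF : ∀ u : V, F (F u) = (μ * B k u) • k) :
    (∃ w : V, LinearIndependent ℝ ![k, w] ∧ B k w = 0 ∧ B w w = -μ ∧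
      ∀ u : V, F u = B w u • k - B k u • w) ∧
    (∀ (k' w' : V) (G : V →ₗ[ℝ] V), B k' k' = 0 → B k' w' = 0 →
      LinearIndependent ℝ ![k', w'] →
      (∀ u : V, G u = B w' u • k' - B k' u • w') →
      ∀ u : V, G (G u) = (-(B w' w') * B k' u) • k') := by
  have hB : IsSymm B := isSymm_of_basis_diagonal b _ hb
  refine ⟨?_, fun k' w' G hk'k' hk'w' _ hG => map_map_eq_of_eq_smul_sub_smul hB hk'k' hk'w' hG⟩
  obtain ⟨u₀, hu₀⟩ := exists_apply_eq_one_of_basis_diagonal b _ hb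
    (by rintro (i | i) <;> norm_num) hk0
  obtain ⟨t, ht⟩ : ∃ t : V →ₗ[ℝ] ℝ, ∀ z, t z = 0 → B z z = 0 → z = 0 := by
    rcases hLor with rfl | rfl
    · exact ⟨b.coord (.inl 0), fun z => eq_zero_of_coord_eq_zero_of_apply_self_eq_zero b _ hb _
        one_ne_zero (by rintro (i | i) hi <;> simp_all [Fin.fin_one_eq_zero])⟩
    · exact ⟨b.coord (.inr 0), fun z => eq_zero_of_coord_eq_zero_of_apply_self_eq_zero b _ hb _
        (neg_ne_zero.mpr one_ne_zero) (by rintro (i | i) hi <;> simp_all [Fin.fin_one_eq_zero])⟩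
  exact exists_eq_smul_sub_smul_of_map_map_eq hB hskew hFF
    (fun y hyy hky => exists_eq_smul_of_isOrtho_of_apply_self_eq_zero hB t ht hk0 hknull hyy hky)
    hμ hk0 hknull hu₀
end

section
/- Let F be a skew-symmetric endomorphism of a real vector space V with nondegenerate symmetric bilinear form g. Suppose there exists a nonzero null vector k ∈ V such that F maps the hyperplane k⊥ = {u : g(k,u)=0} into the span of k. Then there exists v ∈ V such that F(u) = g(v,u)k − g(k,u)v for all u ∈ V. -/
/-- Lemma B.6: if a skew-symmetric endomorphism F maps the orthogonal hyperplane of a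
nonzero null vector k into span(k), then F = k ⊗ v♭ − v ⊗ k♭ for some v. -/
theorem skew_maps_kperp_to_spank
    (V : Type*) [AddCommGroup V] [Module ℝ V] [FiniteDimensional ℝ V]
    (B : V →ₗ[ℝ] V →ₗ[ℝ] ℝ)
    (hsymm : ∀ u v : V, B u v = B v u)
    (hnd : ∀ v : V, (∀ u : V, B v u = 0) → v = 0)
    (hdim : 2 ≤ Module.finrank ℝ V)
    (F : V →ₗ[ℝ] V)
    (hskew : ∀ u v : V, B (F u) v = - B u (F v))
    (k : V) (hk0 : k ≠ 0) (hknull : B k k = 0)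
    (hmap : ∀ u : V, B k u = 0 → ∃ c : ℝ, F u = c • k) :
    ∃ v : V, ∀ u : V, F u = B v u • k - B k u • v := by
  obtain ⟨u0, hu0⟩ : ∃ u : V, B k u ≠ 0 := by
    by_contra h
    push_neg at h
    exact hk0 (hnd k h)
  obtain ⟨w, hkw⟩ : ∃ w : V, B k w = 1 :=
    ⟨(B k u0)⁻¹ • u0, by simp [inv_mul_cancel₀ hu0]⟩
  have hwk : B w k = 1 := by rw [hsymm w k]; exact hkw
  have hwFw : B w (F w) = 0 := by
    have h1 := hskew w w
    have h2 := hsymm (F w) w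
    linarith
  refine ⟨-F w, fun u => ?_⟩
  obtain ⟨c, hc⟩ := hmap (u - B k u • w) (by simp [hkw])
  have hu : F u = B k u • F w + c • k := by
    rw [map_sub, map_smul, sub_eq_iff_eq_add] at hc
    rw [hc]; abel
  have hBFwu : B (F w) u = -c := by
    have h1 := hskew w u
    rw [hu] at h1
    simp only [map_add, map_smul, smul_eq_mul, hwFw, hwk] at h1
    simpa using h1
  rw [map_neg, LinearMap.neg_apply, hBFwu, hu]
  simp
  abel
end

section
/- Let F be a skew-symmetric endomorphism of a real vector space V with nondegenerate symmetric bilinear form g, and suppose F ∘ F = μ k ⊗ k♭ for some nonzero null vector k and nonzero μ ∈ ℝ, and additionally assume F maps k⊥ into span(k). Then F(k) = 0. -/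
/-- Step of Lemma B.5: if F is skew-symmetric, F ∘ F = μ k ⊗ k♭ with k nonzero null and
μ ≠ 0, and F maps k⊥ into span(k), then F(k) = 0. -/
theorem skew_rank_one_sq_apply_k_eq_zero
    (V : Type*) [AddCommGroup V] [Module ℝ V] [FiniteDimensional ℝ V]
    (B : V →ₗ[ℝ] V →ₗ[ℝ] ℝ)
    (hsymm : ∀ u v : V, B u v = B v u)
    (hnd : ∀ v : V, (∀ u : V, B v u = 0) → v = 0)
    (F : V →ₗ[ℝ] V)
    (hskew : ∀ u v : V, B (F u) v = - B u (F v))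
    (k : V) (hk0 : k ≠ 0) (hknull : B k k = 0)
    (μ : ℝ) (hμ : μ ≠ 0)
    (hFF : ∀ u : V, F (F u) = (μ * B k u) • k)
    (hmap : ∀ u : V, B k u = 0 → ∃ c : ℝ, F u = c • k) :
    F k = 0 := by
  obtain ⟨c, hc⟩ := hmap k hknull
  have h1 : F (F k) = (c * c) • k := by
    rw [hc, map_smul, hc, smul_smul]
  have h2 : F (F k) = (0 : ℝ) • k := by
    rw [hFF k, hknull, mul_zero]
  have h3 : (c * c) • k = (0 : ℝ) • k := h1 ▸ h2
  have hc0 : c = 0 := by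
    have := smul_left_injective ℝ hk0 h3
    nlinarith [sq_nonneg c]
  rw [hc, hc0, zero_smul]
end

section
/- Let V be a real vector space with nondegenerate symmetric bilinear form g and fix a nonzero null vector k ∈ V. The map sending the equivalence class of Z in V/span(k) to the endomorphism F_{k,Z}(u) = g(Z,u)k − g(k,u)Z is a well-defined linear isomorphism from the quotient V/span(k) onto the space {F_{k,Z} : Z ∈ V} of such endomorphisms. In particular, if dim V = n+2, this space of endomorphisms has dimension n+1. -/
/-- The linear map Z ↦ F_{k,Z} = k ⊗ Z♭ − Z ⊗ k♭. -/
noncomputable def FkZMap {V : Type*} [AddCommGroup V] [Module ℝ V]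
    (B : V →ₗ[ℝ] V →ₗ[ℝ] ℝ) (k : V) : V →ₗ[ℝ] (V →ₗ[ℝ] V) where
  toFun Z := (B Z).smulRight k - (B k).smulRight Z
  map_add' Z Z' := by
    ext u
    simp [add_smul, smul_add]
    abel
  map_smul' c Z := by
    ext u
    simp [smul_smul, mul_comm, smul_sub]

/-- The map Z̄ ↦ F_{k,Z} is a well-defined linear isomorphism from V / span(k) onto the
space of endomorphisms {F_{k,Z} : Z ∈ V}; in particular, if dim V = n+2 that space has
dimension n+1. -/
theorem quotient_equiv_FkZ_range
    (n : ℕ) (V : Type*) [AddCommGroup V] [Module ℝ V] [FiniteDimensional ℝ V]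
    (B : V →ₗ[ℝ] V →ₗ[ℝ] ℝ)
    (hsymm : ∀ u v : V, B u v = B v u)
    (hnd : ∀ v : V, (∀ u : V, B v u = 0) → v = 0)
    (k : V) (hk0 : k ≠ 0) (hknull : B k k = 0)
    (hdim : Module.finrank ℝ V = n + 2) :
    (∃ e : (V ⧸ Submodule.span ℝ {k}) ≃ₗ[ℝ] LinearMap.range (FkZMap B k),
      ∀ Z : V, (e (Submodule.Quotient.mk Z) : V →ₗ[ℝ] V) = FkZMap B k Z) ∧
    Module.finrank ℝ (LinearMap.range (FkZMap B k)) = n + 1 := by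
  have hker : LinearMap.ker (FkZMap B k) = Submodule.span ℝ {k} := by
    ext Z
    simp only [LinearMap.mem_ker, Submodule.mem_span_singleton]
    constructor
    · intro hZ
      -- find u with B k u ≠ 0
      obtain ⟨u, hu⟩ : ∃ u, B k u ≠ 0 := by
        by_contra h
        push_neg at h
        exact hk0 (hnd k h)
      have h1 : (FkZMap B k Z) u = 0 := by rw [hZ]; rfl
      have h2 : B Z u • k - B k u • Z = 0 := by
        simpa [FkZMap] using h1
      refine ⟨(B k u)⁻¹ * B Z u, ?_⟩
      have : B k u • Z = B Z u • k := by linear_combination (norm := module) -h2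
      have := congrArg (fun w => (B k u)⁻¹ • w) this
      simpa [smul_smul, inv_mul_cancel₀ hu, mul_comm] using this.symm
    · rintro ⟨c, rfl⟩
      ext u
      simp [FkZMap, hsymm (c • k) u, smul_smul, mul_comm]
  let e : (V ⧸ Submodule.span ℝ {k}) ≃ₗ[ℝ] LinearMap.range (FkZMap B k) :=
    (Submodule.quotEquivOfEq _ _ hker.symm).trans (FkZMap B k).quotKerEquivRange
  have he : ∀ Z : V, (e (Submodule.Quotient.mk Z) : V →ₗ[ℝ] V) = FkZMap B k Z := by
    intro Z
    simp only [e, LinearEquiv.trans_apply]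
    rw [show (Submodule.quotEquivOfEq _ _ hker.symm) (Submodule.Quotient.mk Z)
        = Submodule.Quotient.mk Z from rfl]
    exact (FkZMap B k).quotKerEquivRange_apply_mk Z
  refine ⟨⟨e, he⟩, ?_⟩
  have h1 : Module.finrank ℝ (LinearMap.range (FkZMap B k))
      = Module.finrank ℝ (V ⧸ Submodule.span ℝ {k}) := e.symm.finrank_eq.symm ▸ rfl
  have h2 := Submodule.finrank_quotient_add_finrank (Submodule.span ℝ {k})
  rw [finrank_span_singleton hk0, hdim] at h2
  rw [h1] at *
  omega
end

section
/- Let V be a real vector space with nondegenerate symmetric bilinear form g of signature (p,q) with p ≤ q, let Π be a totally degenerate subspace of maximal dimension r = p with basis {k_1,…,k_r}, and let T be an r-dimensional subspace on which g is negative definite. Decompose each v ∈ V as v = v^∥ + v^⊥ with respect to the orthogonal direct sum V = T ⊕ T⊥. Then both the sets {k_1^∥,…,k_r^∥} and {k_1^⊥,…,k_r^⊥} are linearly independent. -/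
/-!
Every combination `v = ∑ cᵢ kᵢ` is isotropic. If `∑ cᵢ kᵢ^⊥ = 0`, then `v ∈ T`, where `B` is
definite, so `v = 0`. If `∑ cᵢ kᵢ^∥ = 0`, then `v` is isotropic and orthogonal to `T`, so `B` is
negative semidefinite on `T ⊔ ℝ v`. Since `B` has a `q`-dimensional positive definite subspace,
Sylvester's inertia bound forces `dim (T ⊔ ℝ v) ≤ p = dim T`, hence `v ∈ T` and again `v = 0`.
In both cases linear independence of the `kᵢ` gives `c = 0`.
-/

open Module Submodule

theorem LinearIndependent.of_sub_mem_of_disjoint {ι R M : Type*} [Ring R] [AddCommGroup M]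
    [Module R M] {k w : ι → M} {S : Submodule R M} (hk : LinearIndependent R k)
    (hS : Disjoint (span R (Set.range k)) S) (hkw : ∀ i, k i - w i ∈ S) :
    LinearIndependent R w := by
  have hmk : S.mkQ ∘ k = S.mkQ ∘ w :=
    funext fun i => (Submodule.Quotient.eq S).2 (hkw i)
  refine LinearIndependent.of_comp S.mkQ ?_
  rw [← hmk]
  exact hk.map (by rwa [ker_mkQ])

namespace LinearMap.BilinForm

theorem apply_self_eq_zero_of_mem_span {R M ι : Type*} [CommSemiring R] [AddCommMonoid M]
    [Module R M] [Fintype ι] {B : LinearMap.BilinForm R M} {k : ι → M}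
    (hk : ∀ i j, B (k i) (k j) = 0) {v : M} (hv : v ∈ span R (Set.range k)) : B v v = 0 := by
  obtain ⟨c, rfl⟩ := (mem_span_range_iff_exists_fun R).1 hv
  simp [hk]

theorem apply_self_nonpos_of_mem_sup_span_singleton {R M : Type*} [CommRing R] [LinearOrder R]
    [AddCommGroup M] [Module R M] {B : LinearMap.BilinForm R M} (hB : B.IsSymm)
    {T : Submodule R M} (hT : ∀ t ∈ T, B t t ≤ 0) {w : M} (hw : w ∈ B.orthogonal T)
    (hww : B w w = 0) : ∀ v ∈ T ⊔ span R {w}, B v v ≤ 0 := by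
  intro v hv
  obtain ⟨t, ht, x, hx, rfl⟩ := mem_sup.1 hv
  obtain ⟨d, rfl⟩ := mem_span_singleton.1 hx
  have htw : B t w = 0 := mem_orthogonal_iff.1 hw t ht
  have hwt : B w t = 0 := by rw [← hB.eq, htw]
  simpa [htw, hwt, hww] using hT t ht

variable {𝕜 V : Type*} [Field 𝕜] [LinearOrder 𝕜] [AddCommGroup V] [Module 𝕜 V]
  {B : LinearMap.BilinForm 𝕜 V}

theorem sigPos_toQuadraticMap_eq_ncard [IsStrictOrderedRing 𝕜] {ι : Type*} [Fintype ι]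
    (b : Basis ι 𝕜 V) (hb : ∀ i j, i ≠ j → B (b i) (b j) = 0) :
    sigPos B.toQuadraticMap = {i | 0 < B (b i) (b i)}.ncard := by
  have : Invertible (2 : 𝕜) := invertibleOfNonzero two_ne_zero
  refine QuadraticForm.sigPos_of_equiv_weightedSumSquares
    ⟨(B.toQuadraticMap.isometryEquivBasisRepr b).trans ?_⟩
  rw [QuadraticMap.basisRepr_eq_of_iIsOrtho]
  · exact QuadraticMap.IsometryEquiv.refl _
  · intro i j hij
    simp [Function.onFun, QuadraticMap.associated_toQuadraticMap, hb i j hij, hb j i hij.symm]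

theorem eq_zero_of_mem_orthogonal_of_apply_self_eq_zero [FiniteDimensional 𝕜 V]
    (hB : B.IsSymm) {T : Submodule 𝕜 V} (hT : ∀ t ∈ T, t ≠ 0 → B t t < 0)
    (hmax : finrank 𝕜 V ≤ sigPos B.toQuadraticMap + finrank 𝕜 T)
    {w : V} (hw : w ∈ B.orthogonal T) (hww : B w w = 0) : w = 0 := by
  have hnonpos : ∀ t ∈ T, B t t ≤ 0 := fun t ht => by
    rcases eq_or_ne t 0 with rfl | ht0
    · simp
    · exact (hT t ht ht0).le
  have hW := QuadraticForm.sigPos_add_finrank_le_of_nonpos (Q := B.toQuadraticMap)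
    (apply_self_nonpos_of_mem_sup_span_singleton hB hnonpos hw hww)
  have hTW : T = T ⊔ span 𝕜 {w} := eq_of_le_of_finrank_le le_sup_left (by omega)
  have hwT : w ∈ T := hTW ▸ mem_sup_right (mem_span_singleton_self w)
  by_contra hw0
  exact (hT w hwT hw0).ne hww

end LinearMap.BilinForm

open LinearMap.BilinForm

theorem projections_of_degenerate_basis_linearIndependent_general
    (p q : ℕ) (V : Type*) [AddCommGroup V] [Module ℝ V]
    (B : V →ₗ[ℝ] V →ₗ[ℝ] ℝ)
    (b : Module.Basis (Fin p ⊕ Fin q) ℝ V)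
    (hb : ∀ i j, B (b i) (b j) =
      if i = j then Sum.elim (fun _ => (-1 : ℝ)) (fun _ => (1 : ℝ)) i else 0)
    (k : Fin p → V) (hk : LinearIndependent ℝ k)
    (hdeg : ∀ i j, B (k i) (k j) = 0)
    (T : Submodule ℝ V) (hT : Module.finrank ℝ T = p)
    (hneg : ∀ v ∈ T, v ≠ 0 → B v v < 0)
    (kpar kperp : Fin p → V)
    (hpar : ∀ i, kpar i ∈ T)
    (hperp : ∀ i, ∀ t ∈ T, B t (kperp i) = 0)
    (hsum : ∀ i, k i = kpar i + kperp i) :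
    LinearIndependent ℝ kpar ∧ LinearIndependent ℝ kperp := by
  have : FiniteDimensional ℝ V := .of_basis b
  have hsymm : IsSymm B := (isSymm_iff_basis b).2 fun i j => by
    rw [hb, hb]
    by_cases hij : i = j <;> simp [hij, eq_comm]
  have hpos : {i | 0 < B (b i) (b i)} = Set.range Sum.inr := by
    ext (i | i) <;> simp [hb]
  have hsig : sigPos (LinearMap.BilinMap.toQuadraticMap B) = q := by
    rw [sigPos_toQuadraticMap_eq_ncard b fun i j hij => by simp [hb, hij], hpos,
      Set.ncard_range_of_injective Sum.inr_injective, Nat.card_eq_fintype_card, Fintype.card_fin]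
  have hmax : finrank ℝ V ≤ sigPos (LinearMap.BilinMap.toQuadraticMap B) + finrank ℝ T := by
    rw [hsig, hT, finrank_eq_card_basis b, Fintype.card_sum, Fintype.card_fin, Fintype.card_fin,
      add_comm]
  refine ⟨hk.of_sub_mem_of_disjoint (S := orthogonal B T) ?_ fun i => ?_,
    hk.of_sub_mem_of_disjoint (S := T) ?_ fun i => ?_⟩
  · refine disjoint_def.2 fun v hvk hvT => ?_
    exact eq_zero_of_mem_orthogonal_of_apply_self_eq_zero hsymm hneg hmax hvT
      (apply_self_eq_zero_of_mem_span hdeg hvk)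
  · rw [hsum, add_sub_cancel_left]
    exact mem_orthogonal_iff.2 (hperp i)
  · refine disjoint_def.2 fun v hvk hvT => ?_
    by_contra hv0
    exact (hneg v hvT hv0).ne (apply_self_eq_zero_of_mem_span hdeg hvk)
  · rw [hsum, add_sub_cancel_right]
    exact hpar i

/-- Lemma B.2 (i),(ii): for a maximal totally degenerate subspace Π with basis {k_i} of a
space of signature (p,q), p ≤ q, and an orthogonal decomposition V = T ⊕ T⊥ with g|_T
negative definite of dimension p, both families of projections {k_i^∥} and {k_i^⊥} are
linearly independent. -/
theorem projections_of_degenerate_basis_linearIndependent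
    (p q : ℕ) (hpq : p ≤ q) (V : Type*) [AddCommGroup V] [Module ℝ V]
    (B : V →ₗ[ℝ] V →ₗ[ℝ] ℝ)
    (b : Module.Basis (Fin p ⊕ Fin q) ℝ V)
    (hb : ∀ i j, B (b i) (b j) =
      if i = j then Sum.elim (fun _ => (-1 : ℝ)) (fun _ => (1 : ℝ)) i else 0)
    (k : Fin p → V) (hk : LinearIndependent ℝ k)
    (hdeg : ∀ i j, B (k i) (k j) = 0)
    (T : Submodule ℝ V) (hT : Module.finrank ℝ T = p)
    (hneg : ∀ v ∈ T, v ≠ 0 → B v v < 0)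
    (kpar kperp : Fin p → V)
    (hpar : ∀ i, kpar i ∈ T)
    (hperp : ∀ i, ∀ t ∈ T, B t (kperp i) = 0)
    (hsum : ∀ i, k i = kpar i + kperp i) :
    LinearIndependent ℝ kpar ∧ LinearIndependent ℝ kperp :=
  projections_of_degenerate_basis_linearIndependent_general p q V B b hb k hk hdeg T hT hneg kpar
    kperp hpar hperp hsum
end

section
/- In the setting of a maximal totally degenerate subspace Π (dimension r = min(p,q)) of a vector space V with nondegenerate symmetric bilinear form of signature (p,q), let Π_T = span{k_1^∥,…,k_r^∥} ⊕ span{k_1^⊥,…,k_r^⊥}. Then a vector v ∈ V is orthogonal to Π if and only if there exists v̄ ∈ Π_T⊥ such that v − v̄ ∈ Π. -/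
/-!
Negative definiteness of `T` makes `g` nondegenerate on the span `W` of the `k_i^∥`, so the
functional `g(·, v)` on `W` is represented by some `w = ∑ c_j k_j^∥ ∈ W`. Take
`v̄ = v - ∑ c_j k_j`. As the `k_j^⊥` are orthogonal to `T`, `g(k_i^∥, ∑ c_j k_j) = g(k_i^∥, w)`,
so `v̄ ⊥ k_i^∥`; as `Π` is totally degenerate and `v ⊥ Π`, also `v̄ ⊥ k_i`, hence `v̄ ⊥ k_i^⊥`.
Conversely `Π ⊆ Π_T`, and `Π` is totally degenerate.
-/

namespace LinearMap

section Span

variable {R M N P : Type*} [CommRing R] [AddCommGroup M] [AddCommGroup N] [AddCommGroup P]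
  [Module R M] [Module R N] [Module R P] {B : M →ₗ[R] N →ₗ[R] P}

theorem apply_eq_zero_of_mem_span {s : Set M} {y : N} (h : ∀ x ∈ s, B x y = 0) {x : M}
    (hx : x ∈ Submodule.span R s) : B x y = 0 :=
  (Submodule.span_le (p := ker (B.flip y))).mpr h hx

theorem apply_eq_zero_of_mem_span_of_mem_span {s : Set M} {t : Set N}
    (h : ∀ x ∈ s, ∀ y ∈ t, B x y = 0) {x : M} {y : N} (hx : x ∈ Submodule.span R s)
    (hy : y ∈ Submodule.span R t) : B x y = 0 :=
  apply_eq_zero_of_mem_span (fun x' hx' => apply_eq_zero_of_mem_span (B := B.flip)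
    (fun y' hy' => h x' hx' y' hy') hy) hx

end Span

theorem exists_mem_forall_apply_eq_of_anisotropic {K V : Type*} [Field K] [AddCommGroup V]
    [Module K V] (B : V →ₗ[K] V →ₗ[K] K) (W : Submodule K V) [FiniteDimensional K W]
    (hW : ∀ w ∈ W, B w w = 0 → w = 0) (f : V →ₗ[K] K) :
    ∃ w ∈ W, ∀ x ∈ W, B x w = f x := by
  set B' : LinearMap.BilinForm K W := (B.domRestrict₁₂ W W).flip
  have hB' : B'.Nondegenerate :=
    ⟨fun w hw => Subtype.ext (hW w w.2 (hw w)), fun w hw => Subtype.ext (hW w w.2 (hw w))⟩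
  exact ⟨_, ((B'.toDual hB').symm (f.domRestrict W)).2, fun x hx =>
    LinearMap.BilinForm.apply_toDual_symm_apply (hB := hB') (f.domRestrict W) ⟨x, hx⟩⟩

end LinearMap

section Decomposition

variable {R V ι : Type*} [AddCommGroup V] {k kpar kperp : ι → V}

theorem Submodule.span_range_le_sup_of_eq_add [Ring R] [Module R V]
    (hsum : ∀ i, k i = kpar i + kperp i) :
    span R (Set.range k) ≤ span R (Set.range kpar) ⊔ span R (Set.range kperp) := by
  rw [span_le]
  rintro _ ⟨i, rfl⟩
  exact hsum i ▸ add_mem_sup (subset_span ⟨i, rfl⟩) (subset_span ⟨i, rfl⟩)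

variable [Fintype ι] {K : Type*} [Field K] [Module K V] {B : V →ₗ[K] V →ₗ[K] K} {T : Submodule K V}

theorem exists_forall_apply_sub_sum_smul_eq_zero (hdeg : ∀ i j, B (k i) (k j) = 0)
    (hT : ∀ t ∈ T, B t t = 0 → t = 0) (hpar : ∀ i, kpar i ∈ T)
    (hperp : ∀ i, ∀ t ∈ T, B t (kperp i) = 0) (hsum : ∀ i, k i = kpar i + kperp i) {v : V}
    (hv : ∀ i, B (k i) v = 0) :
    ∃ c : ι → K, ∀ i, B (kpar i) (v - ∑ j, c j • k j) = 0 ∧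
      B (kperp i) (v - ∑ j, c j • k j) = 0 := by
  have hW : ∀ w ∈ Submodule.span K (Set.range kpar), B w w = 0 → w = 0 := fun w hw =>
    hT w (Submodule.span_le.mpr (Set.range_subset_iff.mpr hpar) hw)
  have := FiniteDimensional.span_of_finite K (Set.finite_range kpar)
  obtain ⟨w, hw, hwv⟩ := B.exists_mem_forall_apply_eq_of_anisotropic _ hW (B.flip v)
  obtain ⟨c, rfl⟩ := (Submodule.mem_span_range_iff_exists_fun K).mp hw
  have hsum_par : ∀ t ∈ T, B t (∑ j, c j • k j) = B t (∑ j, c j • kpar j) := fun t ht => by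
    simp [hsum, smul_add, Finset.sum_add_distrib, hperp _ t ht]
  have hk : ∀ i, B (k i) (v - ∑ j, c j • k j) = 0 := fun i => by simp [hv, hdeg]
  have hkpar : ∀ i, B (kpar i) (v - ∑ j, c j • k j) = 0 := fun i => by
    rw [map_sub, hsum_par _ (hpar i), hwv _ (Submodule.subset_span ⟨i, rfl⟩),
      LinearMap.flip_apply, sub_self]
  refine ⟨c, fun i => ⟨hkpar i, ?_⟩⟩
  rw [eq_sub_of_add_eq' (hsum i).symm, B.map_sub₂, hk, hkpar, sub_zero]

end Decomposition

theorem orthogonal_to_degenerate_iff_general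
    (p : ℕ) (V : Type*) [AddCommGroup V] [Module ℝ V]
    (B : V →ₗ[ℝ] V →ₗ[ℝ] ℝ)
    (k : Fin p → V)
    (hdeg : ∀ i j, B (k i) (k j) = 0)
    (T : Submodule ℝ V)
    (hneg : ∀ v ∈ T, v ≠ 0 → B v v < 0)
    (kpar kperp : Fin p → V)
    (hpar : ∀ i, kpar i ∈ T)
    (hperp : ∀ i, ∀ t ∈ T, B t (kperp i) = 0)
    (hsum : ∀ i, k i = kpar i + kperp i) :
    ∀ v : V,
      (∀ u ∈ Submodule.span ℝ (Set.range k), B u v = 0) ↔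
      (∃ vb : V,
        (∀ u ∈ Submodule.span ℝ (Set.range kpar) ⊔ Submodule.span ℝ (Set.range kperp),
          B u vb = 0) ∧
        v - vb ∈ Submodule.span ℝ (Set.range k)) := by
  intro v
  have hiso : ∀ x ∈ Set.range k, ∀ y ∈ Set.range k, B x y = 0 := by
    rintro _ ⟨i, rfl⟩ _ ⟨j, rfl⟩
    exact hdeg i j
  constructor
  · intro hv
    have hT : ∀ t ∈ T, B t t = 0 → t = 0 := fun t ht ht0 =>
      by_contra fun hne => (hneg t ht hne).ne ht0
    obtain ⟨c, hc⟩ := exists_forall_apply_sub_sum_smul_eq_zero hdeg hT hpar hperp hsum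
      fun i => hv _ (Submodule.subset_span ⟨i, rfl⟩)
    refine ⟨v - ∑ j, c j • k j, fun u hu => ?_, ?_⟩
    · rw [← Submodule.span_union] at hu
      refine LinearMap.apply_eq_zero_of_mem_span ?_ hu
      rintro _ (⟨i, rfl⟩ | ⟨i, rfl⟩)
      exacts [(hc i).1, (hc i).2]
    · rw [sub_sub_cancel]
      exact Submodule.sum_smul_mem _ _ fun j _ => Submodule.subset_span ⟨j, rfl⟩
  · rintro ⟨vb, hvb, hdiff⟩ u hu
    rw [← sub_add_cancel v vb, map_add, hvb u (Submodule.span_range_le_sup_of_eq_add hsum hu),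
      LinearMap.apply_eq_zero_of_mem_span_of_mem_span hiso hu hdiff, add_zero]

/-- Lemma B.2 (iv): with Π_T = span{k_i^∥} ⊕ span{k_i^⊥}, a vector v is orthogonal to the
maximal totally degenerate subspace Π = span{k_i} if and only if there is v̄ orthogonal to
Π_T with v − v̄ ∈ Π. -/
theorem orthogonal_to_degenerate_iff
    (p q : ℕ) (hpq : p ≤ q) (V : Type*) [AddCommGroup V] [Module ℝ V]
    (B : V →ₗ[ℝ] V →ₗ[ℝ] ℝ)
    (b : Module.Basis (Fin p ⊕ Fin q) ℝ V)
    (hb : ∀ i j, B (b i) (b j) =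
      if i = j then Sum.elim (fun _ => (-1 : ℝ)) (fun _ => (1 : ℝ)) i else 0)
    (k : Fin p → V) (hk : LinearIndependent ℝ k)
    (hdeg : ∀ i j, B (k i) (k j) = 0)
    (T : Submodule ℝ V) (hT : Module.finrank ℝ T = p)
    (hneg : ∀ v ∈ T, v ≠ 0 → B v v < 0)
    (kpar kperp : Fin p → V)
    (hpar : ∀ i, kpar i ∈ T)
    (hperp : ∀ i, ∀ t ∈ T, B t (kperp i) = 0)
    (hsum : ∀ i, k i = kpar i + kperp i) :
    ∀ v : V,
      (∀ u ∈ Submodule.span ℝ (Set.range k), B u v = 0) ↔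
      (∃ vb : V,
        (∀ u ∈ Submodule.span ℝ (Set.range kpar) ⊔ Submodule.span ℝ (Set.range kperp),
          B u vb = 0) ∧
        v - vb ∈ Submodule.span ℝ (Set.range k)) :=
  orthogonal_to_degenerate_iff_general p V B k hdeg T hneg kpar kperp hpar hperp hsum
end

section
/- In Minkowski space M^{1,n} (n ≥ 1), a Killing vector field ζ(x) = z + F(x), where z is a constant vector and F a skew-symmetric endomorphism, has a zero at a point x if and only if z + F(x) = 0. If F has the form F = k ⊗ w♭ − w ⊗ k♭ with k null and nonzero, w spacelike, orthogonal to and linearly independent of k, and z = A k + ⟨k,z'⟩ w for constants A ∈ ℝ and z' ∈ M^{1,n}, then the restriction of ζ to the hyperplane z' + k⊥ equals (A + ⟨w,x⟩) k, and its zero set within this hyperplane is the affine codimension-two plane −A⟨w,w⟩^{-1} w + span(k,w)⊥ translated appropriately; in particular ζ is null and tangent to z' + k⊥ and vanishes exactly where A + ⟨w,x⟩ = 0. -/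
theorem killingField_eq_smul_of_apply_eq {R V : Type*} [CommRing R] [AddCommGroup V]
    [Module R V] (B : V →ₗ[R] V →ₗ[R] R) {k w z' x : V} (A : R) (hx : B k x = B k z') :
    (A • k + B k z' • w) + (B w x • k - B k x • w) = (A + B w x) • k := by
  rw [hx, add_smul]
  abel

theorem minkowski_degenerate_killing_on_hyperplane_general
    (V : Type*) [AddCommGroup V] [Module ℝ V]
    (B : V →ₗ[ℝ] V →ₗ[ℝ] ℝ)
    (k w z' : V) (A : ℝ)
    (hk0 : k ≠ 0) (hknull : B k k = 0) :
    ∀ x : V, B k (x - z') = 0 →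
      ((A • k + (B k z') • w) + (B w x • k - B k x • w) = (A + B w x) • k) ∧
      B ((A • k + (B k z') • w) + (B w x • k - B k x • w))
        ((A • k + (B k z') • w) + (B w x • k - B k x • w)) = 0 ∧
      ((A • k + (B k z') • w) + (B w x • k - B k x • w) = 0 ↔ A + B w x = 0) := by
  intro x hx
  have hkx : B k x = B k z' := sub_eq_zero.mp (by rwa [map_sub] at hx)
  rw [killingField_eq_smul_of_apply_eq B A hkx]
  exact ⟨rfl, by simp [hknull], smul_eq_zero_iff_left hk0⟩

/-- Theorem 6.3 (Minkowski, degenerate case computations): for the Killing field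
ζ(x) = z + F(x) with F = k ⊗ w♭ − w ⊗ k♭ (k null nonzero, w spacelike, orthogonal to and
independent of k) and z = A k + ⟨k,z'⟩ w, on the hyperplane z' + k⊥ one has
ζ(x) = (A + ⟨w,x⟩) k; in particular ζ is null there and vanishes exactly where
A + ⟨w,x⟩ = 0. Moreover ζ(x) = 0 iff z + F(x) = 0 by definition. -/
theorem minkowski_degenerate_killing_on_hyperplane
    (n : ℕ) (hn : 1 ≤ n) (V : Type*) [AddCommGroup V] [Module ℝ V]
    (B : V →ₗ[ℝ] V →ₗ[ℝ] ℝ)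
    (b : Module.Basis (Fin 1 ⊕ Fin n) ℝ V)
    (hb : ∀ i j, B (b i) (b j) =
      if i = j then Sum.elim (fun _ => (-1 : ℝ)) (fun _ => (1 : ℝ)) i else 0)
    (k w z' : V) (A : ℝ)
    (hk0 : k ≠ 0) (hknull : B k k = 0)
    (hwspace : 0 < B w w) (horth : B k w = 0)
    (hind : LinearIndependent ℝ ![k, w]) :
    ∀ x : V, B k (x - z') = 0 →
      ((A • k + (B k z') • w) + (B w x • k - B k x • w) = (A + B w x) • k) ∧
      B ((A • k + (B k z') • w) + (B w x • k - B k x • w))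
        ((A • k + (B k z') • w) + (B w x • k - B k x • w)) = 0 ∧
      ((A • k + (B k z') • w) + (B w x • k - B k x • w) = 0 ↔ A + B w x = 0) :=
  minkowski_degenerate_killing_on_hyperplane_general V B k w z' A hk0 hknull
end
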